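/- The Toeplitz Bezoutian commuting identity: B_T D_L^{-1} D_U = D_U D_L^{-1} B_T, where B_T = D_L N_U − N_L D_U and D_L is invertible (e.g. d_1 ≠ 0). -/

import Mathlib

/-!
Encode a lower triangular Toeplitz matrix by the power series of its first column. The map
`f ↦ lowerToeplitz N f` is multiplicative, so lower triangular Toeplitz matrices commute with each
other and with their inverses, which are again of this form. The upper triangular ones commute as
well, being transposes of lower triangular ones after reversing the coefficients. The
Gohberg–Semencul identity is the lower left block of `L f * L g = L g * L f` for the Toeplitz
matrices of size `2m`, whose blocks are `D_L`, `0`, `D_U`, `D_L`. With these commutation rules the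
identity `B D_L⁻¹ D_U = D_U D_L⁻¹ B` is a computation in an arbitrary ring.
-/

theorem bezoutian_mul_mul_comm {A : Type*} [Ring A] {dl nl du nu dli : A} (h₁ : dl * dli = 1)
    (h₂ : dli * dl = 1) (hl : Commute nl dli) (hu : Commute nu du)
    (hgs : dl * nu - nl * du = nu * dl - du * nl) :
    (dl * nu - nl * du) * dli * du = du * dli * (dl * nu - nl * du) :=
  calc (dl * nu - nl * du) * dli * du = (nu * dl - du * nl) * dli * du := by rw [hgs]
    _ = nu * (dl * dli) * du - du * (nl * dli) * du := by noncomm_ring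
    _ = du * (dli * dl) * nu - du * (dli * nl) * du := by
      rw [h₁, h₂, hl.eq, mul_one, mul_one, hu.eq]
    _ = du * dli * (dl * nu - nl * du) := by noncomm_ring

section Toeplitz

open PowerSeries Finset
open scoped Polynomial

theorem Finset.sum_range_ite_mul_ite_eq_sum_antidiagonal {R : Type*} [Semiring R] {a b : ℕ → R}
    {N i j : ℕ} (hji : j ≤ i) (hi : i < N) :
    ∑ k ∈ range N, (if k ≤ i then a (i - k) else 0) * (if j ≤ k then b (k - j) else 0) =
      ∑ p ∈ antidiagonal (i - j), a p.1 * b p.2 := by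
  have hsub : Ico j (i + 1) ⊆ range N := fun k hk => by
    rw [mem_Ico] at hk
    rw [mem_range]
    omega
  rw [← sum_subset hsub fun k _ hk => by
      rw [mem_Ico, not_and_or, not_le, not_lt] at hk
      rcases hk with hk | hk
      · rw [if_neg (show ¬j ≤ k by omega), mul_zero]
      · rw [if_neg (show ¬k ≤ i by omega), zero_mul],
    sum_Ico_eq_sum_range, ← Nat.sum_antidiagonal_swap]
  simp only [Prod.fst_swap, Prod.snd_swap]
  rw [Nat.sum_antidiagonal_eq_sum_range_succ (fun p q => a q * b p), Nat.succ_eq_add_one,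
    show i + 1 - j = i - j + 1 by omega]
  refine sum_congr rfl fun t ht => ?_
  rw [mem_range] at ht
  rw [if_pos (by omega), if_pos (by omega), Nat.add_sub_cancel_left, Nat.sub_add_eq]

namespace Polynomial

variable {R : Type*} [Semiring R] [DecidableEq R] {m : ℕ}

theorem constantCoeff_coe_ofFn (v : Fin (m + 1) → R) :
    PowerSeries.constantCoeff (ofFn (m + 1) v : R⟦X⟧) = v 0 := by
  rw [constantCoeff_coe, ofFn_coeff_eq_val_of_lt v m.succ_pos]
  rfl

theorem natDegree_ofFn_le (v : Fin (m + 1) → R) : (ofFn (m + 1) v).natDegree ≤ m :=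
  Nat.lt_succ_iff.mp (ofFn_natDegree_lt m.succ_pos v)

end Polynomial

namespace Matrix

variable {R : Type*}

noncomputable def lowerToeplitz [Semiring R] (N : ℕ) (f : R⟦X⟧) : Matrix (Fin N) (Fin N) R :=
  of fun i j => if j ≤ i then coeff (i - j : ℕ) f else 0

/-- For `f` of degree at most `m` this is upper triangular with first row `(f_m, …, f_1)`: the
matrix `D_U` of `d` when `f = d_1 + d_2 X + ⋯ + d_{m+1} X^m`. -/
noncomputable def upperToeplitz [Semiring R] (m : ℕ) (f : R⟦X⟧) : Matrix (Fin m) (Fin m) R :=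
  of fun i j => coeff (m + i - j : ℕ) f

section Semiring

variable [Semiring R]

theorem lowerToeplitz_apply (N : ℕ) (f : R⟦X⟧) (i j : Fin N) :
    lowerToeplitz N f i j = if j ≤ i then coeff (i - j : ℕ) f else 0 := rfl

theorem lowerToeplitz_one (N : ℕ) : lowerToeplitz N (1 : R⟦X⟧) = 1 := by
  ext i j
  rw [lowerToeplitz_apply, coeff_one, one_apply]
  rcases eq_or_ne i j with rfl | hij
  · simp
  · have : (i : ℕ) - j ≠ 0 ∨ ¬j ≤ i := by omega
    rcases this with h | h <;> simp [h, hij]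

theorem lowerToeplitz_mul (N : ℕ) (f g : R⟦X⟧) :
    lowerToeplitz N f * lowerToeplitz N g = lowerToeplitz N (f * g) := by
  ext i j
  simp only [mul_apply, lowerToeplitz_apply, Fin.le_def, coeff_mul]
  rw [Fin.sum_univ_eq_sum_range (fun k : ℕ =>
    (if k ≤ (i : ℕ) then coeff (R := R) (i - k) f else 0) *
      (if (j : ℕ) ≤ k then coeff (R := R) (k - j) g else 0)) N]
  split_ifs with hji
  · exact sum_range_ite_mul_ite_eq_sum_antidiagonal (a := fun k => coeff k f)
      (b := fun k => coeff k g) hji i.2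
  · refine sum_eq_zero fun k _ => ?_
    split_ifs <;> first | omega | simp

theorem submatrix_finSumFinEquiv_lowerToeplitz (m : ℕ) (f : R⟦X⟧) :
    (lowerToeplitz (m + m) f).submatrix finSumFinEquiv finSumFinEquiv =
      fromBlocks (lowerToeplitz m f) 0 (upperToeplitz m f) (lowerToeplitz m f) := by
  ext (i | i) (j | j)
  · rw [submatrix_apply, fromBlocks_apply₁₁]
    simp only [lowerToeplitz_apply, finSumFinEquiv_apply_left, Fin.le_def, Fin.val_castAdd]
  · rw [submatrix_apply, fromBlocks_apply₁₂, zero_apply, lowerToeplitz_apply, if_neg]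
    simp only [finSumFinEquiv_apply_left, finSumFinEquiv_apply_right, Fin.le_def,
      Fin.val_castAdd, Fin.val_natAdd]
    omega
  · rw [submatrix_apply, fromBlocks_apply₂₁, lowerToeplitz_apply, if_pos]
    · rfl
    simp only [finSumFinEquiv_apply_left, finSumFinEquiv_apply_right, Fin.le_def,
      Fin.val_castAdd, Fin.val_natAdd]
    omega
  · rw [submatrix_apply, fromBlocks_apply₂₂]
    simp only [lowerToeplitz_apply, finSumFinEquiv_apply_right, Fin.le_def, Fin.val_natAdd,
      Nat.add_le_add_iff_left, Nat.add_sub_add_left]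

theorem upperToeplitz_eq_transpose_lowerToeplitz_reflect {m : ℕ} {p : R[X]}
    (hp : p.natDegree ≤ m) :
    upperToeplitz m (p : R⟦X⟧) = (lowerToeplitz m (p.reflect m : R⟦X⟧))ᵀ := by
  ext i j
  simp only [upperToeplitz, of_apply, transpose_apply, lowerToeplitz_apply, Polynomial.coeff_coe,
    Polynomial.coeff_reflect, Fin.le_def]
  split_ifs with hij
  · rw [Polynomial.revAt_le (by omega)]
    congr 1
    omega
  · exact Polynomial.coeff_eq_zero_of_natDegree_lt (by omega)

end Semiring

section CommSemiring

variable [CommSemiring R]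

theorem lowerToeplitz_mul_comm (N : ℕ) (f g : R⟦X⟧) :
    lowerToeplitz N f * lowerToeplitz N g = lowerToeplitz N g * lowerToeplitz N f := by
  rw [lowerToeplitz_mul, lowerToeplitz_mul, mul_comm]

theorem upperToeplitz_mul_comm {m : ℕ} {p q : R[X]} (hp : p.natDegree ≤ m)
    (hq : q.natDegree ≤ m) :
    upperToeplitz m (p : R⟦X⟧) * upperToeplitz m (q : R⟦X⟧) =
      upperToeplitz m (q : R⟦X⟧) * upperToeplitz m (p : R⟦X⟧) := by
  rw [upperToeplitz_eq_transpose_lowerToeplitz_reflect hp,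
    upperToeplitz_eq_transpose_lowerToeplitz_reflect hq, ← transpose_mul, ← transpose_mul,
    lowerToeplitz_mul_comm]

end CommSemiring

theorem lowerToeplitz_mul_upperToeplitz_sub_lowerToeplitz_mul_upperToeplitz [CommRing R]
    (m : ℕ) (f g : R⟦X⟧) :
    lowerToeplitz m f * upperToeplitz m g - lowerToeplitz m g * upperToeplitz m f =
      upperToeplitz m g * lowerToeplitz m f - upperToeplitz m f * lowerToeplitz m g := by
  rw [sub_eq_sub_iff_add_eq_add, add_comm]
  have h := congrArg (fun M => (M.submatrix finSumFinEquiv finSumFinEquiv).toBlocks₂₁)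
    (lowerToeplitz_mul_comm (m + m) f g)
  simpa only [← submatrix_mul_equiv _ _ _ finSumFinEquiv, submatrix_finSumFinEquiv_lowerToeplitz,
    fromBlocks_multiply, toBlocks_fromBlocks₂₁] using h

section Field

variable {K : Type*} [Field K]

theorem lowerToeplitz_mul_lowerToeplitz_inv (N : ℕ) {f : K⟦X⟧} (hf : constantCoeff f ≠ 0) :
    lowerToeplitz N f * lowerToeplitz N f⁻¹ = 1 := by
  rw [lowerToeplitz_mul, PowerSeries.mul_inv_cancel f hf, lowerToeplitz_one]

theorem inv_lowerToeplitz (N : ℕ) {f : K⟦X⟧} (hf : constantCoeff f ≠ 0) :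
    (lowerToeplitz N f)⁻¹ = lowerToeplitz N f⁻¹ :=
  inv_eq_right_inv (lowerToeplitz_mul_lowerToeplitz_inv N hf)

end Field

section OfFn

variable [Semiring R] [DecidableEq R] {m : ℕ}

theorem lowerToeplitz_ofFn_apply (v : Fin (m + 1) → R) (i j : Fin m) :
    lowerToeplitz m (Polynomial.ofFn (m + 1) v : R⟦X⟧) i j =
      if h : j ≤ i then v ⟨i - j, by omega⟩ else 0 := by
  rw [lowerToeplitz_apply, Polynomial.coeff_coe]
  split_ifs
  · exact Polynomial.ofFn_coeff_eq_val_of_lt v _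
  · rfl

theorem upperToeplitz_ofFn_apply (v : Fin (m + 1) → R) (i j : Fin m) :
    upperToeplitz m (Polynomial.ofFn (m + 1) v : R⟦X⟧) i j =
      if h : i ≤ j then v ⟨m + i - j, by omega⟩ else 0 := by
  rw [upperToeplitz, of_apply, Polynomial.coeff_coe]
  split_ifs with h
  · exact Polynomial.ofFn_coeff_eq_val_of_lt v _
  · exact Polynomial.ofFn_coeff_eq_zero_of_ge v (by omega)

end OfFn

end Matrix

end Toeplitz

/-- The Toeplitz Bezoutian commuting identity: `B_T D_L⁻¹ D_U = D_U D_L⁻¹ B_T`,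
where `B_T = D_L N_U − N_L D_U` and `D_L` is invertible (`d_1 ≠ 0`). -/
theorem bezoutian_commute (m : ℕ) (n d : Fin (m + 1) → ℝ) (hd : d 0 ≠ 0)
    (NL DL NU DU BT : Matrix (Fin m) (Fin m) ℝ)
    (hNL : ∀ i j : Fin m, NL i j =
      if h : j.val ≤ i.val then n ⟨i.val - j.val, by omega⟩ else 0)
    (hDL : ∀ i j : Fin m, DL i j =
      if h : j.val ≤ i.val then d ⟨i.val - j.val, by omega⟩ else 0)
    (hNU : ∀ i j : Fin m, NU i j =
      if h : i.val ≤ j.val then n ⟨m + i.val - j.val, by omega⟩ else 0)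
    (hDU : ∀ i j : Fin m, DU i j =
      if h : i.val ≤ j.val then d ⟨m + i.val - j.val, by omega⟩ else 0)
    (hBT : BT = DL * NU - NL * DU) :
    BT * DL⁻¹ * DU = DU * DL⁻¹ * BT := by
  obtain rfl : DL = Matrix.lowerToeplitz m (Polynomial.ofFn (m + 1) d) :=
    Matrix.ext fun i j => (hDL i j).trans (Matrix.lowerToeplitz_ofFn_apply d i j).symm
  obtain rfl : NL = Matrix.lowerToeplitz m (Polynomial.ofFn (m + 1) n) :=
    Matrix.ext fun i j => (hNL i j).trans (Matrix.lowerToeplitz_ofFn_apply n i j).symm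
  obtain rfl : DU = Matrix.upperToeplitz m (Polynomial.ofFn (m + 1) d) :=
    Matrix.ext fun i j => (hDU i j).trans (Matrix.upperToeplitz_ofFn_apply d i j).symm
  obtain rfl : NU = Matrix.upperToeplitz m (Polynomial.ofFn (m + 1) n) :=
    Matrix.ext fun i j => (hNU i j).trans (Matrix.upperToeplitz_ofFn_apply n i j).symm
  have hd₀ : PowerSeries.constantCoeff (Polynomial.ofFn (m + 1) d : PowerSeries ℝ) ≠ 0 := by
    rwa [Polynomial.constantCoeff_coe_ofFn]
  have h₁ := Matrix.lowerToeplitz_mul_lowerToeplitz_inv m hd₀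
  rw [hBT, Matrix.inv_lowerToeplitz m hd₀]
  exact bezoutian_mul_mul_comm h₁ (mul_eq_one_comm.mp h₁) (Matrix.lowerToeplitz_mul_comm _ _ _)
    (Matrix.upperToeplitz_mul_comm (Polynomial.natDegree_ofFn_le n)
      (Polynomial.natDegree_ofFn_le d))
    (Matrix.lowerToeplitz_mul_upperToeplitz_sub_lowerToeplitz_mul_upperToeplitz _ _ _)
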